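/- arXiv:2509.08850 — 2 statements merged into one kernel-verified Lean document; each statement's English description precedes it below -/
import Mathlib

section
/- Let α, β, γ > 0, μ, r, y ∈ ℝ, θ̄(y) = (αy + γμ)/(α + γ), V = 1/β + 1/(α + γ), and define Π(x, y) = (r + θ̄(y))(1 − Φ(x; θ̄(y), V)) + (1/(α + γ)) φ(x; θ̄(y), V). Then for every x ∈ ℝ, the partial derivative of Π with respect to x equals ∂Π/∂x (x, y) = −( r + (αy + βx + γμ)/(α + β + γ) ) · φ(x; θ̄(y), V). -/
open MeasureTheory

/-- Gaussian density of `N(m, v)` evaluated at `t`. -/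
noncomputable def phi (t m v : ℝ) : ℝ :=
  (2 * Real.pi * v) ^ (-(1:ℝ)/2) * Real.exp (-(t - m)^2 / (2*v))

/-- Gaussian cumulative distribution function of `N(m, v)` evaluated at `t`. -/
noncomputable def Phi (t m v : ℝ) : ℝ := ∫ s in Set.Iic t, phi s m v

lemma phi_continuous (m v : ℝ) : Continuous fun t => phi t m v := by
  unfold phi
  fun_prop

lemma phi_integrable (m : ℝ) {v : ℝ} (hv : 0 < v) :
    Integrable (fun t => phi t m v) := by
  have h : (fun t : ℝ => phi t m v)
      = fun t => (2 * Real.pi * v) ^ (-(1:ℝ)/2) *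
        Real.exp (-(1/(2*v)) * (t - m)^2) := by
    funext t; unfold phi; ring_nf
  rw [h]
  exact ((integrable_exp_neg_mul_sq (by positivity : (0:ℝ) < 1/(2*v))).comp_sub_right
    m).const_mul _

set_option maxHeartbeats 1000000 in
lemma Phi_hasDerivAt (m : ℝ) {v : ℝ} (hv : 0 < v) (x : ℝ) :
    HasDerivAt (fun t => Phi t m v) (phi x m v) x := by
  have hint := phi_integrable m hv
  have key : ∀ t : ℝ, Phi t m v = Phi x m v + ∫ s in x..t, phi s m v := by
    intro t
    have h : (∫ s in Set.Iic t, phi s m v) - ∫ s in Set.Iic x, phi s m v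
        = ∫ s in x..t, phi s m v :=
      intervalIntegral.integral_Iic_sub_Iic hint.integrableOn hint.integrableOn
    unfold Phi
    linarith
  have hd : HasDerivAt (fun t => Phi x m v + ∫ s in x..t, phi s m v) (phi x m v) x := by
    have := intervalIntegral.integral_hasDerivAt_right
      (hint.intervalIntegrable (a := x) (b := x))
      ((phi_continuous m v).aestronglyMeasurable.stronglyMeasurableAtFilter)
      ((phi_continuous m v).continuousAt)
    exact this.const_add _
  exact hd.congr_of_eventuallyEq (Filter.Eventually.of_forall key)

lemma phi_hasDerivAt (m : ℝ) {v : ℝ} (hv : 0 < v) (x : ℝ) :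
    HasDerivAt (fun t => phi t m v) (-((x - m)/v) * phi x m v) x := by
  have h1 : HasDerivAt (fun t : ℝ => -(t - m)^2 / (2*v)) (-((x - m)/v)) x := by
    have : HasDerivAt (fun t : ℝ => (t - m)^2) (2 * (x - m)) x := by
      simpa using ((hasDerivAt_id x).sub_const m).fun_pow 2
    have := (this.neg).div_const (2*v)
    refine this.congr_deriv ?_
    field_simp
  have h2 := h1.exp
  have := h2.const_mul ((2 * Real.pi * v) ^ (-(1:ℝ)/2))
  refine this.congr_deriv ?_
  unfold phi
  ring

/-- The partial derivative of the sender's closed-form interim payoff `Π(x, y)`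
with respect to the receivers' threshold `x` equals
`−(r + (αy + βx + γμ)/(α + β + γ)) · φ(x; θ̄(y), V)`. -/
theorem sender_payoff_deriv (α β γ : ℝ) (hα : 0 < α) (hβ : 0 < β) (hγ : 0 < γ)
    (μ r y x : ℝ) :
    HasDerivAt
      (fun x' : ℝ =>
        (r + (α*y + γ*μ)/(α + γ)) * (1 - Phi x' ((α*y + γ*μ)/(α + γ)) (1/β + 1/(α + γ)))
          + (1/(α + γ)) * phi x' ((α*y + γ*μ)/(α + γ)) (1/β + 1/(α + γ)))
      (-((r + (α*y + β*x + γ*μ)/(α + β + γ))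
          * phi x ((α*y + γ*μ)/(α + γ)) (1/β + 1/(α + γ)))) x := by
  set m := (α*y + γ*μ)/(α + γ) with hm
  set v := 1/β + 1/(α + γ) with hv
  have hvpos : 0 < v := by positivity
  have h1 := ((Phi_hasDerivAt m hvpos x).const_sub 1).const_mul (r + m)
  have h2 := (phi_hasDerivAt m hvpos x).const_mul (1/(α + γ))
  have h := h1.add h2
  refine h.congr_deriv ?_
  have hA : α + γ ≠ 0 := by positivity
  have hABG : α + β + γ ≠ 0 := by positivity
  rw [hm, hv]
  field_simp
  ring
end

section
/- Let α, β, γ > 0, μ, r, y ∈ ℝ and b ∈ ℝ a preference bias. Define the biased sender's payoff Π(x, y, b) = (r + b + θ̄(y))(1 − Φ(x; θ̄(y), V)) + (1/(α + γ)) φ(x; θ̄(y), V). Then x ↦ Π(x, y, b) attains its unique global maximum at x*(y, b) = −(αy + γμ + (α + β + γ)(r + b))/β, and for each fixed y the map b ↦ x*(y, b) is strictly decreasing: ∂x*(y, b)/∂b = −(α + β + γ)/β < 0. (The Sender-optimal threshold under bias b: a positive bias toward the risky action lowers the sender's preferred threshold.) -/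
open MeasureTheory

lemma phi_pos {v : ℝ} (hv : 0 < v) (t m : ℝ) : 0 < phi t m v := by
  unfold phi
  positivity

lemma continuous_phi (m v : ℝ) : Continuous (fun t => phi t m v) := by
  unfold phi
  fun_prop

lemma integrable_phi {v : ℝ} (hv : 0 < v) (m : ℝ) : Integrable (fun t => phi t m v) := by
  have h : Integrable (fun t : ℝ => Real.exp (-(1/(2*v)) * t^2)) :=
    integrable_exp_neg_mul_sq (by positivity)
  have h2 := (h.comp_sub_right m).const_mul ((2 * Real.pi * v) ^ (-(1:ℝ)/2))
  refine h2.congr (Filter.Eventually.of_forall fun t => ?_)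
  unfold phi
  ring_nf

lemma hasDerivAt_Phi {v : ℝ} (hv : 0 < v) (m x : ℝ) :
    HasDerivAt (fun t => Phi t m v) (phi x m v) x := by
  have hint := integrable_phi hv m
  have key : ∀ t : ℝ, Phi t m v = Phi 0 m v + ∫ s in (0:ℝ)..t, phi s m v := by
    intro t
    have := intervalIntegral.integral_Iic_sub_Iic (f := fun s => phi s m v) (μ := volume)
      hint.integrableOn hint.integrableOn (a := 0) (b := t)
    unfold Phi
    linarith [this]
  have hd : HasDerivAt (fun t => Phi 0 m v + ∫ s in (0:ℝ)..t, phi s m v) (phi x m v) x := by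
    refine HasDerivAt.const_add _ ?_
    exact intervalIntegral.integral_hasDerivAt_right
      (hint.intervalIntegrable)
      ((continuous_phi m v).aestronglyMeasurable.stronglyMeasurableAtFilter)
      (continuous_phi m v).continuousAt
  exact hd.congr_of_eventuallyEq (Filter.Eventually.of_forall key)

lemma hasDerivAt_phi {v : ℝ} (hv : 0 < v) (m x : ℝ) :
    HasDerivAt (fun t => phi t m v) (phi x m v * (-(x - m)/v)) x := by
  have h1 : HasDerivAt (fun t : ℝ => -(t - m)^2/(2*v)) (-(x - m)/v) x := by
    have : HasDerivAt (fun t : ℝ => (t - m)^2) (2*(x - m)) x := by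
      simpa [mul_comm] using ((hasDerivAt_id x).sub_const m).fun_pow 2
    have h2 := (this.neg).div_const (2*v)
    refine h2.congr_deriv ?_
    field_simp
  unfold phi
  have h3 := (h1.exp).const_mul ((2 * Real.pi * v) ^ (-(1:ℝ)/2))
  refine h3.congr_deriv ?_
  ring

/-- The Sender-optimal threshold under bias `b`: the biased payoff `x ↦ Π(x, y, b)`
attains its unique global maximum at `x*(y, b) = −(αy + γμ + (α+β+γ)(r+b))/β`, and
`b ↦ x*(y, b)` is strictly decreasing with derivative `−(α+β+γ)/β < 0`. -/
theorem biased_sender_optimal_threshold (α β γ : ℝ) (hα : 0 < α) (hβ : 0 < β) (hγ : 0 < γ)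
    (μ r y b : ℝ) :
    let θb : ℝ := (α*y + γ*μ)/(α + γ)
    let V : ℝ := 1/β + 1/(α + γ)
    let Pay : ℝ → ℝ → ℝ := fun x b' =>
      (r + b' + θb) * (1 - Phi x θb V) + (1/(α + γ)) * phi x θb V
    let xstar : ℝ → ℝ := fun b' => -(α*y + γ*μ + (α + β + γ)*(r + b'))/β
    (∀ x : ℝ, x ≠ xstar b → Pay x b < Pay (xstar b) b) ∧
    StrictAnti xstar ∧
    HasDerivAt xstar (-(α + β + γ)/β) b ∧
    -(α + β + γ)/β < 0 := by
  intro θb V Pay xstar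
  have hag : (0:ℝ) < α + γ := by linarith
  have hVdef : V = 1/β + 1/(α + γ) := rfl
  have hV : 0 < V := by rw [hVdef]; positivity
  have habg : (0:ℝ) < α + β + γ := by linarith
  refine ⟨?_, ?_, ?_, ?_⟩
  · -- global strict max
    have hPayD : ∀ x : ℝ, HasDerivAt (fun x => Pay x b)
        ((1/(α+γ))/V * phi x θb V * (xstar b - x)) x := by
      intro x
      have hPhi := hasDerivAt_Phi hV θb x
      have hphi := hasDerivAt_phi hV θb x
      have h1 : HasDerivAt (fun x => (r + b + θb) * (1 - Phi x θb V))
          ((r + b + θb) * (-(phi x θb V))) x := (hPhi.const_sub 1).const_mul _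
      have h2 := hphi.const_mul (1/(α+γ))
      have h3 := h1.add h2
      have heq : (r + b + θb) * (-(phi x θb V)) +
          1/(α+γ) * (phi x θb V * (-(x - θb)/V)) =
          (1/(α+γ))/V * phi x θb V * (xstar b - x) := by
        have hx : xstar b = -(α*y + γ*μ + (α + β + γ)*(r + b))/β := rfl
        have hθ : θb = (α*y + γ*μ)/(α + γ) := rfl
        rw [hx, hθ, hVdef]
        have hV' : (1:ℝ)/β + 1/(α + γ) ≠ 0 := by positivity
        field_simp
        ring
      exact heq ▸ h3
    have hcV : 0 < (1/(α+γ))/V := by positivity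
    have hmono : StrictMonoOn (fun x => Pay x b) (Set.Iic (xstar b)) := by
      refine strictMonoOn_of_deriv_pos (convex_Iic _)
        (fun x _ => (hPayD x).continuousAt.continuousWithinAt) (fun x hx => ?_)
      rw [interior_Iic] at hx
      rw [(hPayD x).deriv]
      exact mul_pos (mul_pos hcV (phi_pos hV x θb)) (sub_pos.mpr hx)
    have hanti : StrictAntiOn (fun x => Pay x b) (Set.Ici (xstar b)) := by
      refine strictAntiOn_of_deriv_neg (convex_Ici _)
        (fun x _ => (hPayD x).continuousAt.continuousWithinAt) (fun x hx => ?_)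
      rw [interior_Ici] at hx
      rw [(hPayD x).deriv]
      exact mul_neg_of_pos_of_neg (mul_pos hcV (phi_pos hV x θb)) (sub_neg.mpr hx)
    intro x hx
    rcases lt_or_gt_of_ne hx with h | h
    · exact hmono (le_of_lt h) Set.self_mem_Iic h
    · exact hanti Set.self_mem_Ici (le_of_lt h) h
  · -- StrictAnti xstar
    intro a c hac
    show -(α*y + γ*μ + (α + β + γ)*(r + c))/β < -(α*y + γ*μ + (α + β + γ)*(r + a))/β
    rw [div_lt_div_iff₀ hβ hβ]
    nlinarith [mul_lt_mul_of_pos_left hac habg]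
  · -- derivative in b
    have h1 : HasDerivAt (fun b' : ℝ => r + b') 1 b := by
      simpa using (hasDerivAt_id b).const_add r
    have h2 := ((h1.const_mul (α + β + γ)).const_add (α*y + γ*μ)).neg.div_const β
    refine h2.congr_deriv ?_
    ring
  · exact div_neg_of_neg_of_pos (by linarith) hβ
end
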